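/- The MPLP++ iterates are bounded: for any pairwise graphical model (V, E, Y, θ) and any fixed edge ordering, there exists a constant C > 0 such that for every i ≥ 0 all entries of the cost vector H^i(θ) (all values θ^{(i)}_u(s) and θ^{(i)}_uv(s,t)) are bounded in absolute value by C. -/

import Mathlib

/-- Minimum of a real-valued function over a finite nonempty type. -/
noncomputable def fmin {Y : Type*} [Fintype Y] [Nonempty Y] (f : Y → ℝ) : ℝ :=
  Finset.univ.inf' Finset.univ_nonempty f

/-- The cost vector of a pairwise graphical model: unary costs for every vertex and
pairwise costs for every (potential) edge. -/
structure Costs (V Y : Type*) where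
  un : V → Y → ℝ
  pw : V × V → Y × Y → ℝ

/-- The dual value `D(θ) = Σ_u min_s θ_u(s) + Σ_{uv∈E} min_{(s,t)} θ_uv(s,t)`. -/
noncomputable def dual {V Y : Type*} [Fintype V] [Fintype Y] [Nonempty Y]
    (E : Finset (V × V)) (c : Costs V Y) : ℝ :=
  (∑ u, fmin (c.un u)) + ∑ e ∈ E, fmin (c.pw e)

/-- One MPLP++ edge update of the cost vector at edge `e = (u,v)`. -/
noncomputable def processEdge {V Y : Type*} [Fintype Y] [Nonempty Y] [DecidableEq V]
    (c : Costs V Y) (e : V × V) : Costs V Y :=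
  let g : Y × Y → ℝ := fun p => c.un e.1 p.1 + c.un e.2 p.2 + c.pw e p
  let θM : Y → ℝ := fun s => (1 / 2) * fmin (fun t => g (s, t))
  let θHv : Y → ℝ := fun t => fmin (fun s => g (s, t) - θM s)
  let θHu : Y → ℝ := fun s => fmin (fun t => g (s, t) - θHv t)
  { un := fun w => if w = e.1 then θHu else if w = e.2 then θHv else c.un w
    pw := fun e' => if e' = e then (fun p => g p - θHu p.1 - θHv p.2) else c.pw e' }

/-- One MPLP++ iteration `H`: process all edges in the given fixed order. -/
noncomputable def mplppIter {V Y : Type*} [Fintype Y] [Nonempty Y] [DecidableEq V]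
    (order : List (V × V)) (c : Costs V Y) : Costs V Y :=
  order.foldl processEdge c

/-!
Every edge update is a reparametrization: it leaves the energy
`Σ_u θ_u(x_u) + Σ_{uv ∈ E} θ_uv(x_u, x_v)` of every labeling `x` unchanged, and it makes the
processed pairwise cost nonnegative, because `θ^H_u(s) + θ^H_v(t) ≤ g(s, t)`. Hence after one
full iteration all pairwise costs are nonnegative and stay so. From then on a lower bound `β`
on all unary costs is preserved too, since the new unaries are at least `min g / 2 ≥ β`.
Each entry is thus bounded below, and bounded above because it is one summand of the energy of
a suitable labeling, whose value is at most the largest energy of the initial costs.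
-/

theorem Costs.exists_abs_le {V Y : Type*} [Finite V] [Finite Y] (c : Costs V Y) :
    ∃ B, (∀ u s, |c.un u s| ≤ B) ∧ ∀ e p, |c.pw e p| ≤ B := by
  obtain ⟨Bu, hBu⟩ := Finite.bddAbove_range fun q : V × Y => |c.un q.1 q.2|
  obtain ⟨Bp, hBp⟩ := Finite.bddAbove_range fun q : (V × V) × (Y × Y) => |c.pw q.1 q.2|
  exact ⟨max Bu Bp, fun u s => le_max_of_le_left (hBu ⟨(u, s), rfl⟩),
    fun e p => le_max_of_le_right (hBp ⟨(e, p), rfl⟩)⟩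

section EdgeUpdate

variable {Y : Type*} [Fintype Y] [Nonempty Y]

theorem fmin_le (f : Y → ℝ) (y : Y) : fmin f ≤ f y :=
  Finset.inf'_le _ (Finset.mem_univ y)

theorem le_fmin {a : ℝ} {f : Y → ℝ} (h : ∀ y, a ≤ f y) : a ≤ fmin f :=
  Finset.le_inf' _ _ fun y _ => h y

theorem fmin_le_fmin_section (g : Y × Y → ℝ) (s : Y) : fmin g ≤ fmin fun t => g (s, t) :=
  le_fmin fun t => fmin_le g (s, t)

variable (g : Y × Y → ℝ)

noncomputable def thetaM (s : Y) : ℝ := (1 / 2) * fmin fun t => g (s, t)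

noncomputable def thetaHv (t : Y) : ℝ := fmin fun s => g (s, t) - thetaM g s

noncomputable def thetaHu (s : Y) : ℝ := fmin fun t => g (s, t) - thetaHv g t

theorem thetaHu_add_thetaHv_le (s t : Y) : thetaHu g s + thetaHv g t ≤ g (s, t) := by
  have := fmin_le (fun t => g (s, t) - thetaHv g t) t
  rw [thetaHu]
  linarith

theorem half_fmin_le_thetaHv (t : Y) : fmin g / 2 ≤ thetaHv g t :=
  le_fmin fun s => by
    have hrow : (fmin fun t => g (s, t)) ≤ g (s, t) := fmin_le _ t
    have := fmin_le_fmin_section g s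
    rw [thetaM]
    linarith

theorem half_fmin_le_thetaHu (s : Y) : fmin g / 2 ≤ thetaHu g s :=
  le_fmin fun t => by
    have hv : thetaHv g t ≤ g (s, t) - thetaM g s := fmin_le _ s
    have := fmin_le_fmin_section g s
    rw [thetaM] at hv
    linarith

end EdgeUpdate

section ProcessEdge

variable {V Y : Type*} [Fintype Y] [Nonempty Y] [DecidableEq V]

noncomputable def edgeCost (c : Costs V Y) (e : V × V) (p : Y × Y) : ℝ :=
  c.un e.1 p.1 + c.un e.2 p.2 + c.pw e p

theorem processEdge_un (c : Costs V Y) (e : V × V) :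
    (processEdge c e).un = fun w => if w = e.1 then thetaHu (edgeCost c e)
      else if w = e.2 then thetaHv (edgeCost c e) else c.un w :=
  rfl

theorem processEdge_pw (c : Costs V Y) (e : V × V) :
    (processEdge c e).pw = fun e' => if e' = e then
      (fun p => edgeCost c e p - thetaHu (edgeCost c e) p.1 - thetaHv (edgeCost c e) p.2)
      else c.pw e' :=
  rfl

theorem processEdge_un_of_ne (c : Costs V Y) {e : V × V} {w : V} (h₁ : w ≠ e.1) (h₂ : w ≠ e.2) :
    (processEdge c e).un w = c.un w := by
  simp [processEdge_un, h₁, h₂]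

theorem processEdge_pw_of_ne (c : Costs V Y) {e e' : V × V} (h : e' ≠ e) :
    (processEdge c e).pw e' = c.pw e' := by
  simp [processEdge_pw, h]

theorem processEdge_pw_self_nonneg (c : Costs V Y) (e : V × V) (p : Y × Y) :
    0 ≤ (processEdge c e).pw e p := by
  have := thetaHu_add_thetaHv_le (edgeCost c e) p.1 p.2
  simp only [processEdge_pw, if_true]
  linarith

theorem foldl_processEdge_pw_of_notMem {e : V × V} {l : List (V × V)} (he : e ∉ l)
    (c : Costs V Y) : (l.foldl processEdge c).pw e = c.pw e := by
  induction l generalizing c with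
  | nil => rfl
  | cons e' l ih =>
    rw [List.foldl_cons, ih (fun h => he (List.mem_cons_of_mem _ h)),
      processEdge_pw_of_ne c fun h => he (List.mem_cons.2 (Or.inl h))]

theorem foldl_processEdge_pw_nonneg {e : V × V} {l : List (V × V)} (he : e ∈ l)
    (c : Costs V Y) (p : Y × Y) : 0 ≤ (l.foldl processEdge c).pw e p := by
  induction l generalizing c with
  | nil => cases he
  | cons e' l ih =>
    rw [List.foldl_cons]
    by_cases hl : e ∈ l
    · exact ih hl _
    · obtain rfl : e = e' := (List.mem_cons.1 he).resolve_right hl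
      rw [foldl_processEdge_pw_of_notMem hl]
      exact processEdge_pw_self_nonneg c e p

structure Costs.IsBoundedBelow (E : Finset (V × V)) (β : ℝ) (c : Costs V Y) : Prop where
  pw_nonneg : ∀ e ∈ E, ∀ p, 0 ≤ c.pw e p
  le_un : ∀ u s, β ≤ c.un u s

theorem isBoundedBelow_processEdge {E : Finset (V × V)} {β : ℝ} {c : Costs V Y}
    {e : V × V} (he : e ∈ E) (hc : c.IsBoundedBelow E β) :
    (processEdge c e).IsBoundedBelow E β where
  pw_nonneg e' he' p := by
    by_cases h : e' = e
    · subst h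
      exact processEdge_pw_self_nonneg c e' p
    · rw [processEdge_pw_of_ne c h]
      exact hc.pw_nonneg e' he' p
  le_un w s := by
    have hg : 2 * β ≤ fmin (edgeCost c e) := le_fmin fun p => by
      have := hc.le_un e.1 p.1
      have := hc.le_un e.2 p.2
      have := hc.pw_nonneg e he p
      rw [edgeCost]
      linarith
    have := half_fmin_le_thetaHu (edgeCost c e) s
    have := half_fmin_le_thetaHv (edgeCost c e) s
    simp only [processEdge_un]
    split_ifs
    · linarith
    · linarith
    · exact hc.le_un w s

theorem isBoundedBelow_foldl_processEdge {E : Finset (V × V)} {β : ℝ} {c : Costs V Y}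
    {l : List (V × V)} (hl : ∀ e ∈ l, e ∈ E) (hc : c.IsBoundedBelow E β) :
    (l.foldl processEdge c).IsBoundedBelow E β := by
  induction l generalizing c with
  | nil => exact hc
  | cons e l ih =>
    exact ih (fun e' he' => hl e' (List.mem_cons_of_mem _ he'))
      (isBoundedBelow_processEdge (hl e List.mem_cons_self) hc)

theorem isBoundedBelow_iterate_mplppIter {E : Finset (V × V)} {β : ℝ} {c : Costs V Y}
    {order : List (V × V)} (horder : ∀ e ∈ order, e ∈ E) (hc : c.IsBoundedBelow E β) (i : ℕ) :
    ((mplppIter order)^[i] c).IsBoundedBelow E β := by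
  induction i with
  | zero => exact hc
  | succ i ih =>
    rw [Function.iterate_succ_apply']
    exact isBoundedBelow_foldl_processEdge horder ih

end ProcessEdge

section Energy

variable {V Y : Type*} [Fintype V]

noncomputable def energy (E : Finset (V × V)) (c : Costs V Y) (x : V → Y) : ℝ :=
  (∑ u, c.un u (x u)) + ∑ e ∈ E, c.pw e (x e.1, x e.2)

namespace Costs.IsBoundedBelow

variable {E : Finset (V × V)} {β : ℝ} {c : Costs V Y}

theorem card_mul_le_sum_un (hc : c.IsBoundedBelow E β) (x : V → Y) :
    Fintype.card V * β ≤ ∑ u, c.un u (x u) := by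
  simpa [nsmul_eq_mul] using
    Finset.card_nsmul_le_sum Finset.univ (fun u => c.un u (x u)) β fun u _ => hc.le_un u (x u)

theorem un_sub_le (hc : c.IsBoundedBelow E β) (x : V → Y) (u : V) :
    c.un u (x u) - β ≤ energy E c x - Fintype.card V * β := by
  have hsingle : c.un u (x u) - β ≤ ∑ w, (c.un w (x w) - β) :=
    Finset.single_le_sum (fun w _ => sub_nonneg.2 (hc.le_un w (x w))) (Finset.mem_univ u)
  have hpw : 0 ≤ ∑ e ∈ E, c.pw e (x e.1, x e.2) :=
    Finset.sum_nonneg fun e he => hc.pw_nonneg e he _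
  simp only [Finset.sum_sub_distrib, Finset.sum_const, Finset.card_univ, nsmul_eq_mul]
    at hsingle
  rw [energy]
  linarith

theorem pw_le (hc : c.IsBoundedBelow E β) (x : V → Y) {e : V × V} (he : e ∈ E) :
    c.pw e (x e.1, x e.2) ≤ energy E c x - Fintype.card V * β := by
  have hsingle : c.pw e (x e.1, x e.2) ≤ ∑ e' ∈ E, c.pw e' (x e'.1, x e'.2) :=
    Finset.single_le_sum (f := fun e' => c.pw e' (x e'.1, x e'.2))
      (fun e' he' => hc.pw_nonneg e' he' _) he
  have := hc.card_mul_le_sum_un x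
  rw [energy]
  linarith

end Costs.IsBoundedBelow

theorem exists_abs_le_of_isBoundedBelow [Nonempty Y] [DecidableEq V] {E : Finset (V × V)}
    (hE : ∀ e ∈ E, e.1 ≠ e.2) (M β : ℝ) :
    ∃ B, ∀ c : Costs V Y, (∀ x, energy E c x ≤ M) → c.IsBoundedBelow E β →
      (∀ u s, |c.un u s| ≤ B) ∧ ∀ e ∈ E, ∀ p, |c.pw e p| ≤ B := by
  refine ⟨|M - Fintype.card V * β| + |β|, fun c hM hc => ⟨fun u s => ?_, fun e he p => ?_⟩⟩
  · let x := Function.update (fun _ => Classical.arbitrary Y) u s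
    have hup := hc.un_sub_le x u
    have hlow := hc.le_un u s
    simp only [x, Function.update_self] at hup
    have := hM x
    rw [abs_le]
    constructor <;> linarith [le_abs_self (M - Fintype.card V * β), le_abs_self β,
      neg_abs_le β, abs_nonneg (M - Fintype.card V * β)]
  · let x := Function.update (Function.update (fun _ => Classical.arbitrary Y) e.1 p.1) e.2 p.2
    have hx : (x e.1, x e.2) = p := by
      simp [x, Function.update_of_ne (hE e he)]
    have hup := hc.pw_le x he
    have hlow := hc.pw_nonneg e he p
    rw [hx] at hup
    have := hM x
    rw [abs_le]
    constructor <;> linarith [le_abs_self (M - Fintype.card V * β), abs_nonneg β,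
      abs_nonneg (M - Fintype.card V * β)]

end Energy

section EnergyInvariance

variable {V Y : Type*} [Fintype V] [Fintype Y] [Nonempty Y] [DecidableEq V]

theorem energy_processEdge {E : Finset (V × V)} {e : V × V} (he : e ∈ E) (hne : e.1 ≠ e.2)
    (c : Costs V Y) (x : V → Y) : energy E (processEdge c e) x = energy E c x := by
  set g := edgeCost c e
  have hun : ∑ w, ((processEdge c e).un w (x w) - c.un w (x w))
      = (thetaHu g (x e.1) - c.un e.1 (x e.1)) + (thetaHv g (x e.2) - c.un e.2 (x e.2)) := by
    rw [Fintype.sum_eq_add e.1 e.2 hne]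
    · simp [processEdge_un, g, hne.symm]
    · rintro w ⟨h₁, h₂⟩
      rw [processEdge_un_of_ne c h₁ h₂, sub_self]
  have hpw : ∑ e' ∈ E, ((processEdge c e).pw e' (x e'.1, x e'.2) - c.pw e' (x e'.1, x e'.2))
      = g (x e.1, x e.2) - thetaHu g (x e.1) - thetaHv g (x e.2) - c.pw e (x e.1, x e.2) := by
    rw [Finset.sum_eq_single_of_mem e he]
    · simp [processEdge_pw, g]
    · intro e' _ h
      rw [processEdge_pw_of_ne c h, sub_self]
  rw [Finset.sum_sub_distrib] at hun hpw
  simp only [g, edgeCost] at hpw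
  unfold energy
  linarith

theorem energy_foldl_processEdge {E : Finset (V × V)} (hE : ∀ e ∈ E, e.1 ≠ e.2)
    {l : List (V × V)} (hl : ∀ e ∈ l, e ∈ E) (c : Costs V Y) (x : V → Y) :
    energy E (l.foldl processEdge c) x = energy E c x := by
  induction l generalizing c with
  | nil => rfl
  | cons e l ih =>
    have he := hl e List.mem_cons_self
    rw [List.foldl_cons, ih (fun e' he' => hl e' (List.mem_cons_of_mem _ he')),
      energy_processEdge he (hE e he)]

theorem energy_iterate_mplppIter {E : Finset (V × V)} (hE : ∀ e ∈ E, e.1 ≠ e.2)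
    {order : List (V × V)} (horder : ∀ e ∈ order, e ∈ E) (c : Costs V Y) (x : V → Y) (i : ℕ) :
    energy E ((mplppIter order)^[i] c) x = energy E c x := by
  induction i with
  | zero => rfl
  | succ i ih =>
    rw [Function.iterate_succ_apply', mplppIter, energy_foldl_processEdge hE horder, ih]

end EnergyInvariance

theorem mplpp_iterates_bounded_general {V Y : Type*} [Fintype V] [Fintype Y] [Nonempty Y] [DecidableEq V]
    (E : Finset (V × V)) (hE : ∀ e ∈ E, e.1 ≠ e.2)
    (order : List (V × V)) (horder : ∀ e, e ∈ order ↔ e ∈ E)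
    (c : Costs V Y) :
    ∃ C : ℝ, 0 < C ∧ ∀ i : ℕ,
      (∀ u s, |((mplppIter order)^[i] c).un u s| ≤ C) ∧
      (∀ e ∈ E, ∀ p, |((mplppIter order)^[i] c).pw e p| ≤ C) := by
  have horder_sub : ∀ e ∈ order, e ∈ E := fun e he => (horder e).1 he
  obtain ⟨B₀, hB₀⟩ := c.exists_abs_le
  obtain ⟨B₁, hB₁⟩ := (mplppIter order c).exists_abs_le
  obtain ⟨M, hM⟩ := Finite.bddAbove_range (energy E c)
  obtain ⟨B, hB⟩ := exists_abs_le_of_isBoundedBelow (Y := Y) hE M (-B₁)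
  -- After one iteration every edge of `E` has been processed, so its pairwise cost is nonnegative.
  have hc₁ : (mplppIter order c).IsBoundedBelow E (-B₁) :=
    ⟨fun e he p => foldl_processEdge_pw_nonneg ((horder e).2 he) c p,
      fun u s => (abs_le.1 (hB₁.1 u s)).1⟩
  refine ⟨max (max B₀ B) 1, by positivity, ?_⟩
  have hB₀C : B₀ ≤ max (max B₀ B) 1 := le_max_of_le_left (le_max_left _ _)
  have hBC : B ≤ max (max B₀ B) 1 := le_max_of_le_left (le_max_right _ _)
  rintro (_ | i)
  · exact ⟨fun u s => (hB₀.1 u s).trans hB₀C, fun e _ p => (hB₀.2 e p).trans hB₀C⟩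
  · have hMi : ∀ x, energy E ((mplppIter order)^[i + 1] c) x ≤ M := fun x => by
      rw [energy_iterate_mplppIter hE horder_sub]
      exact hM ⟨x, rfl⟩
    rw [Function.iterate_succ_apply] at hMi ⊢
    obtain ⟨hun, hpw⟩ := hB _ hMi (isBoundedBelow_iterate_mplppIter horder_sub hc₁ i)
    exact ⟨fun u s => (hun u s).trans hBC, fun e he p => (hpw e he p).trans hBC⟩

/-- The MPLP++ iterates are bounded: all entries of every iterate are bounded in
absolute value by a single constant `C > 0`. -/
theorem mplpp_iterates_bounded {V Y : Type*} [Fintype V] [Fintype Y] [Nonempty Y] [DecidableEq V]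
    (E : Finset (V × V)) (hE : ∀ e ∈ E, e.1 ≠ e.2)
    (order : List (V × V)) (horder : ∀ e, e ∈ order ↔ e ∈ E) (hnodup : order.Nodup)
    (c : Costs V Y) :
    ∃ C : ℝ, 0 < C ∧ ∀ i : ℕ,
      (∀ u s, |((mplppIter order)^[i] c).un u s| ≤ C) ∧
      (∀ e ∈ E, ∀ p, |((mplppIter order)^[i] c).pw e p| ≤ C) :=
  mplpp_iterates_bounded_general E hE order horder c
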